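/- Let m ≥ 1 be an integer and ν = 2m − 1. The weight polynomial w_ν(x) = Σ_{j=1}^{ν} j(−x)^{j−1} satisfies w_ν(x) > 0 for all x ∈ [0,1], w_ν(0) = 1, and w_ν(1) = m; moreover, for all integers k, l ≥ 0 the transmuted Legendre polynomials satisfy ∫₀¹ w_ν(x) 𝒫_{νk}(x) 𝒫_{νl}(x) dx = δ_{kl}/(2k+1). -/

import Mathlib

open Polynomial MeasureTheory Real Filter

/-- The Legendre polynomial of degree `n`, via the Rodrigues formula
`P_n(x) = 1/(2^n n!) dⁿ/dxⁿ (x² - 1)ⁿ`. -/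
noncomputable def legendre (n : ℕ) : Polynomial ℝ :=
  (1 / (2 ^ n * n.factorial) : ℝ) • derivative^[n] ((X ^ 2 - 1) ^ n)

/-- The shifted Legendre polynomial `P̃_n(x) = P_n(2x - 1)` on `[0,1]`. -/
noncomputable def shiftedLegendre (n : ℕ) (x : ℝ) : ℝ :=
  (legendre n).eval (2 * x - 1)

/-- The transmuted Legendre polynomial `𝒫_{νn}(x)`: `𝒫_{ν0} = 1` and
`𝒫_{νn}(x) = P̃_n(1 + ∑_{j=1}^{ν} (-x)^j)` for `n ≥ 1`. -/
noncomputable def transmutedLegendre (ν n : ℕ) (x : ℝ) : ℝ :=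
  if n = 0 then 1 else shiftedLegendre n (1 + ∑ j ∈ Finset.Icc 1 ν, (-x) ^ j)

/-- The weight polynomial `w_ν(x) = ∑_{j=1}^{ν} j (-x)^{j-1}`. -/
noncomputable def transmutedWeight (ν : ℕ) (x : ℝ) : ℝ :=
  ∑ j ∈ Finset.Icc 1 ν, (j : ℝ) * (-x) ^ (j - 1)

/-!
The substitution `t = 1 + ∑_{j=1}^ν (-x)^j = ∑_{i=0}^ν (-x)^i` has `dt = -w_ν(x) dx` and,
for odd `ν`, maps `0 ↦ 1` and `1 ↦ 0`. Hence `∫₀¹ w_ν · (f ∘ t) = ∫₀¹ f`, and orthogonality of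
the transmuted polynomials is that of the shifted Legendre polynomials. The latter follows from
Rodrigues' formula by `n` integrations by parts, the boundary terms vanishing because `(x² - 1)ⁿ`
has roots of order `n` at `±1`. The facts about the weight are read off the identity
`(1 + x)² w_ν(x) = 1 + (ν + 1) x^ν + ν x^(ν+1)` for odd `ν`.
-/

noncomputable def rodriguesPoly (n : ℕ) : ℝ[X] := (X ^ 2 - 1) ^ n

lemma rodriguesPoly_monic (n : ℕ) : (rodriguesPoly n).Monic := by
  simpa [rodriguesPoly] using ((monic_X_pow_sub_C (1 : ℝ) two_ne_zero).pow n)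

lemma natDegree_rodriguesPoly (n : ℕ) : (rodriguesPoly n).natDegree = 2 * n := by
  rw [rodriguesPoly, natDegree_pow, ← C_1, natDegree_X_pow_sub_C, mul_comm]

lemma eval_iterate_derivative_rodriguesPoly_of_lt {n j : ℕ} (hj : j < n) {a : ℝ}
    (ha : a ^ 2 = 1) : (derivative^[j] (rodriguesPoly n)).eval a = 0 := by
  have hroot : X - C a ∣ (X ^ 2 - 1 : ℝ[X]) := by simp [dvd_iff_isRoot, ha]
  have hdvd := pow_sub_dvd_iterate_derivative_of_pow_dvd j (pow_dvd_pow_of_dvd hroot n)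
  exact dvd_iff_isRoot.mp ((dvd_pow_self _ (by omega)).trans hdvd)

lemma iterate_derivative_rodriguesPoly_two_mul (n : ℕ) :
    derivative^[2 * n] (rodriguesPoly n) = C ((2 * n).factorial : ℝ) := by
  have hdeg : (derivative^[2 * n] (rodriguesPoly n)).natDegree = 0 := by
    have := natDegree_iterate_derivative (rodriguesPoly n) (2 * n)
    rw [natDegree_rodriguesPoly] at this
    omega
  rw [eq_C_of_natDegree_eq_zero hdeg, coeff_iterate_derivative, zero_add,
    ← natDegree_rodriguesPoly, coeff_natDegree, (rodriguesPoly_monic n).leadingCoeff,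
    natDegree_rodriguesPoly, Nat.descFactorial_self, nsmul_one]

lemma legendre_eq_smul (n : ℕ) :
    legendre n = (1 / (2 ^ n * n.factorial) : ℝ) • derivative^[n] (rodriguesPoly n) := rfl

lemma natDegree_legendre_le (n : ℕ) : (legendre n).natDegree ≤ n := by
  rw [legendre_eq_smul]
  refine (natDegree_smul_le _ _).trans ((natDegree_iterate_derivative _ n).trans ?_)
  rw [natDegree_rodriguesPoly]
  omega

lemma integral_derivative_mul_eq_neg {p q : ℝ[X]} {a b : ℝ} (ha : p.eval a = 0)
    (hb : p.eval b = 0) :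
    ∫ x in a..b, (derivative p).eval x * q.eval x
      = -∫ x in a..b, p.eval x * (derivative q).eval x := by
  have hparts := intervalIntegral.integral_deriv_mul_eq_sub (a := a) (b := b)
    (fun x _ => p.hasDerivAt x) (fun x _ => q.hasDerivAt x)
    ((derivative p).continuous.intervalIntegrable _ _)
    ((derivative q).continuous.intervalIntegrable _ _)
  have hprod (r s : ℝ[X]) : IntervalIntegrable (fun x => r.eval x * s.eval x) volume a b :=
    (r.continuous.mul s.continuous).intervalIntegrable _ _
  rw [intervalIntegral.integral_add (hprod _ _) (hprod _ _), ha, hb] at hparts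
  linarith

lemma integral_iterate_derivative_rodriguesPoly_mul {n i j : ℕ} (hij : i + j ≤ n) (q : ℝ[X]) :
    ∫ x in (-1)..1, (derivative^[i + j] (rodriguesPoly n)).eval x * q.eval x
      = (-1) ^ j * ∫ x in (-1)..1,
          (derivative^[i] (rodriguesPoly n)).eval x * (derivative^[j] q).eval x := by
  induction j generalizing i with
  | zero => simp
  | succ j ih =>
    rw [← add_assoc, add_right_comm, ih (by omega), Function.iterate_succ_apply',
      integral_derivative_mul_eq_neg (eval_iterate_derivative_rodriguesPoly_of_lt (by omega)
        (by norm_num)) (eval_iterate_derivative_rodriguesPoly_of_lt (by omega) (by norm_num)),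
      Function.iterate_succ_apply', pow_succ]
    ring

lemma integral_one_sub_sq_pow_succ (n : ℕ) :
    (2 * n + 3 : ℝ) * ∫ x in (-1 : ℝ)..1, (1 - x ^ 2) ^ (n + 1)
      = (2 * n + 2 : ℝ) * ∫ x in (-1 : ℝ)..1, (1 - x ^ 2) ^ n := by
  have hderiv (x : ℝ) : HasDerivAt (fun x : ℝ => x * (1 - x ^ 2) ^ (n + 1))
      ((2 * n + 3) * (1 - x ^ 2) ^ (n + 1) - (2 * n + 2) * (1 - x ^ 2) ^ n) x := by
    refine ((hasDerivAt_id' x).mul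
      (((hasDerivAt_pow 2 x).const_sub 1).fun_pow (n + 1))).congr_deriv ?_
    push_cast
    ring
  have hFTC := intervalIntegral.integral_eq_sub_of_hasDerivAt (a := -1) (b := 1)
    (fun x _ => hderiv x)
    (by apply Continuous.intervalIntegrable; fun_prop)
  rw [intervalIntegral.integral_sub (by apply Continuous.intervalIntegrable; fun_prop)
    (by apply Continuous.intervalIntegrable; fun_prop), intervalIntegral.integral_const_mul,
    intervalIntegral.integral_const_mul] at hFTC
  norm_num at hFTC
  linarith

lemma integral_one_sub_sq_pow (n : ℕ) :
    ∫ x in (-1 : ℝ)..1, (1 - x ^ 2) ^ n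
      = 2 ^ (2 * n + 1) * (n.factorial : ℝ) ^ 2 / (2 * n + 1).factorial := by
  induction n with
  | zero => norm_num
  | succ n ih =>
    have hrec : ∫ x in (-1 : ℝ)..1, (1 - x ^ 2) ^ (n + 1)
        = (2 * n + 2 : ℝ) / (2 * n + 3) * ∫ x in (-1 : ℝ)..1, (1 - x ^ 2) ^ n := by
      rw [div_mul_eq_mul_div, eq_div_iff (by positivity), mul_comm,
        integral_one_sub_sq_pow_succ]
    rw [hrec, ih, Nat.factorial_succ n, show 2 * (n + 1) + 1 = (2 * n + 1) + 1 + 1 by ring,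
      Nat.factorial_succ ((2 * n + 1) + 1), Nat.factorial_succ (2 * n + 1)]
    push_cast
    field_simp
    ring

lemma integral_legendre_mul (n : ℕ) (q : ℝ[X]) :
    ∫ x in (-1 : ℝ)..1, (legendre n).eval x * q.eval x
      = 1 / (2 ^ n * n.factorial) *
          ∫ x in (-1 : ℝ)..1, (1 - x ^ 2) ^ n * (derivative^[n] q).eval x := by
  have hparts := integral_iterate_derivative_rodriguesPoly_mul (n := n) (i := 0) (j := n)
    (zero_add n).le q
  rw [zero_add, Function.iterate_zero_apply] at hparts
  simp only [legendre_eq_smul, eval_smul, smul_eq_mul, mul_assoc,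
    intervalIntegral.integral_const_mul, hparts]
  rw [← intervalIntegral.integral_const_mul]
  congr 1
  refine intervalIntegral.integral_congr fun x _ => ?_
  simp only [rodriguesPoly, eval_pow, eval_sub, eval_X, eval_one]
  rw [← mul_assoc, ← mul_pow]
  ring

lemma integral_legendre_mul_of_natDegree_lt {n : ℕ} {q : ℝ[X]} (hq : q.natDegree < n) :
    ∫ x in (-1 : ℝ)..1, (legendre n).eval x * q.eval x = 0 := by
  simp [integral_legendre_mul, iterate_derivative_eq_zero hq]

lemma iterate_derivative_legendre_self (n : ℕ) :
    derivative^[n] (legendre n) = C (((2 * n).factorial : ℝ) / (2 ^ n * n.factorial)) := by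
  rw [legendre_eq_smul, iterate_derivative_smul, ← Function.iterate_add_apply, ← two_mul,
    iterate_derivative_rodriguesPoly_two_mul, smul_C, smul_eq_mul]
  ring_nf

lemma integral_legendre_mul_self (n : ℕ) :
    ∫ x in (-1 : ℝ)..1, (legendre n).eval x * (legendre n).eval x = 2 / (2 * n + 1) := by
  rw [integral_legendre_mul, iterate_derivative_legendre_self]
  simp only [eval_C, intervalIntegral.integral_mul_const, integral_one_sub_sq_pow]
  rw [Nat.factorial_succ (2 * n)]
  push_cast
  field_simp
  ring

lemma integral_legendre_mul_legendre (k l : ℕ) :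
    ∫ x in (-1 : ℝ)..1, (legendre k).eval x * (legendre l).eval x
      = if k = l then 2 / (2 * (k : ℝ) + 1) else 0 := by
  rcases lt_trichotomy k l with hlt | rfl | hgt
  · simp_rw [mul_comm ((legendre k).eval _), if_neg hlt.ne]
    exact integral_legendre_mul_of_natDegree_lt ((natDegree_legendre_le k).trans_lt hlt)
  · simp [integral_legendre_mul_self]
  · rw [if_neg hgt.ne']
    exact integral_legendre_mul_of_natDegree_lt ((natDegree_legendre_le l).trans_lt hgt)

lemma integral_shiftedLegendre_mul_shiftedLegendre (k l : ℕ) :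
    ∫ x in (0 : ℝ)..1, shiftedLegendre k x * shiftedLegendre l x
      = (if k = l then 1 else 0) / (2 * k + 1) := by
  simp only [_root_.shiftedLegendre]
  rw [intervalIntegral.integral_comp_mul_sub (fun t => (legendre k).eval t * (legendre l).eval t)
    two_ne_zero]
  norm_num [integral_legendre_mul_legendre]
  split_ifs <;> norm_num
  field_simp

lemma continuous_shiftedLegendre (n : ℕ) : Continuous (shiftedLegendre n) :=
  (legendre n).continuous.comp (by fun_prop)

noncomputable def transmutation (ν : ℕ) (x : ℝ) : ℝ := 1 + ∑ j ∈ Finset.Icc 1 ν, (-x) ^ j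

lemma transmutedLegendre_eq (ν n : ℕ) (x : ℝ) :
    transmutedLegendre ν n x = shiftedLegendre n (transmutation ν x) := by
  rcases eq_or_ne n 0 with rfl | hn
  · simp [transmutedLegendre, _root_.shiftedLegendre, legendre]
  · rw [transmutedLegendre, if_neg hn, transmutation]

lemma transmutation_eq_geom_sum (ν : ℕ) (x : ℝ) :
    transmutation ν x = ∑ i ∈ Finset.range (ν + 1), (-x) ^ i := by
  rw [transmutation, Finset.sum_range_succ', pow_zero, add_comm, Finset.range_eq_Ico,
    Finset.sum_Ico_add' (fun i => (-x) ^ i)]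
  rfl

lemma transmutation_zero (ν : ℕ) : transmutation ν 0 = 1 := by
  simp [transmutation_eq_geom_sum]

lemma transmutation_one_of_odd {ν : ℕ} (hν : Odd ν) : transmutation ν 1 = 0 := by
  rw [transmutation_eq_geom_sum, neg_one_geom_sum, if_pos hν.add_one]

lemma hasDerivAt_transmutation (ν : ℕ) (x : ℝ) :
    HasDerivAt (transmutation ν) (-transmutedWeight ν x) x := by
  have hterm (j : ℕ) : HasDerivAt (fun x : ℝ => (-x) ^ j) (-(j * (-x) ^ (j - 1))) x := by
    simpa using (hasDerivAt_neg x).fun_pow j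
  exact ((HasDerivAt.fun_sum (u := Finset.Icc 1 ν) fun j _ => hterm j).const_add 1).congr_deriv
    (by simp [transmutedWeight, Finset.sum_neg_distrib])

lemma continuous_transmutedWeight (ν : ℕ) : Continuous (transmutedWeight ν) := by
  unfold transmutedWeight
  fun_prop

lemma one_add_sq_mul_transmutedWeight (ν : ℕ) (x : ℝ) :
    (1 + x) ^ 2 * transmutedWeight ν x = 1 - (ν + 1) * (-x) ^ ν + ν * (-x) ^ (ν + 1) := by
  induction ν with
  | zero => simp [transmutedWeight]
  | succ ν ih =>
    rw [transmutedWeight, Finset.sum_Icc_succ_top (by omega), ← transmutedWeight, mul_add, ih,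
      Nat.add_sub_cancel]
    push_cast
    ring

lemma one_add_sq_mul_transmutedWeight_of_odd {ν : ℕ} (hν : Odd ν) (x : ℝ) :
    (1 + x) ^ 2 * transmutedWeight ν x = 1 + (ν + 1) * x ^ ν + ν * x ^ (ν + 1) := by
  rw [one_add_sq_mul_transmutedWeight, hν.neg_pow, hν.add_one.neg_pow]
  ring

lemma transmutedWeight_pos {ν : ℕ} (hν : Odd ν) {x : ℝ} (hx : 0 ≤ x) :
    0 < transmutedWeight ν x := by
  have h : 0 < (1 + x) ^ 2 * transmutedWeight ν x := by
    rw [one_add_sq_mul_transmutedWeight_of_odd hν]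
    positivity
  exact pos_of_mul_pos_right h (by positivity)

lemma transmutedWeight_zero {ν : ℕ} (hν : ν ≠ 0) : transmutedWeight ν 0 = 1 := by
  simpa [zero_pow hν] using one_add_sq_mul_transmutedWeight ν 0

lemma two_mul_transmutedWeight_one {ν : ℕ} (hν : Odd ν) : 2 * transmutedWeight ν 1 = ν + 1 := by
  have h := one_add_sq_mul_transmutedWeight_of_odd hν 1
  norm_num at h
  linarith

lemma integral_transmutedWeight_mul_comp_transmutation {ν : ℕ} (hν : Odd ν) {f : ℝ → ℝ}
    (hf : Continuous f) :
    ∫ x in (0 : ℝ)..1, transmutedWeight ν x * f (transmutation ν x) = ∫ t in (0 : ℝ)..1, f t := by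
  have h := intervalIntegral.integral_comp_mul_deriv (a := 0) (b := 1)
    (fun x _ => hasDerivAt_transmutation ν x) (continuous_transmutedWeight ν).neg.continuousOn hf
  rw [transmutation_zero, transmutation_one_of_odd hν, intervalIntegral.integral_symm 0 1] at h
  simp only [Function.comp, mul_neg, intervalIntegral.integral_neg, neg_inj] at h
  simpa only [mul_comm] using h

/-- Properties of the weight `w_ν` and orthogonality of the transmuted
Legendre polynomials for `ν = 2m - 1`:
`∫₀¹ w_ν(x) 𝒫_{νk}(x) 𝒫_{νl}(x) dx = δ_{kl}/(2k+1)`. -/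
theorem transmutedLegendre_orthogonality (m : ℕ) (hm : 1 ≤ m) :
    (∀ x ∈ Set.Icc (0:ℝ) 1, 0 < transmutedWeight (2 * m - 1) x) ∧
    transmutedWeight (2 * m - 1) 0 = 1 ∧
    transmutedWeight (2 * m - 1) 1 = m ∧
    ∀ k l : ℕ,
      ∫ x in (0:ℝ)..1,
          transmutedWeight (2 * m - 1) x * transmutedLegendre (2 * m - 1) k x *
            transmutedLegendre (2 * m - 1) l x =
        (if k = l then 1 else 0) / (2 * (k : ℝ) + 1) := by
  have hν : Odd (2 * m - 1) := ⟨m - 1, by omega⟩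
  refine ⟨fun x hx => transmutedWeight_pos hν hx.1, transmutedWeight_zero hν.pos.ne', ?_,
    fun k l => ?_⟩
  · have hw := two_mul_transmutedWeight_one hν
    rw [Nat.cast_sub (by omega)] at hw
    push_cast at hw
    linarith
  · simp_rw [transmutedLegendre_eq, mul_assoc]
    exact (integral_transmutedWeight_mul_comp_transmutation hν
      ((continuous_shiftedLegendre k).mul (continuous_shiftedLegendre l))).trans
      (integral_shiftedLegendre_mul_shiftedLegendre k l)
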